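/- Let n ≥ 2, m = n(n−1)/2, B ∈ ℝ^{m×n} the signed vertex-edge incidence matrix of the complete graph on n vertices, S ⊆ {1,…,m} a set of pair indices, and r̄(j) ∈ ℝ a target value for each j ∈ S. Define F(w) = Σ_{j ∈ S} ([R(w)]_{j,j} − r̄(j))², where R(w) = B (Bᵀ diag(w) B)⁺ Bᵀ. Then at every w ∈ ℝ^m with strictly positive entries, F is differentiable and its gradient is ∇F(w) = 2 (R∘R) Δ(w), where ∘ denotes the Hadamard (entrywise) product, R = R(w), and Δ(w) ∈ ℝ^m has entries Δ(w)_j = r̄(j) − [R(w)]_{j,j} for j ∈ S and 0 otherwise; equivalently, ∂F/∂w_i = 2 Σ_{j ∈ S} (r̄(j) − [R(w)]_{j,j}) · ([R(w)]_{i,j})² for each i. -/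

import Mathlib

/-! For positive weights, `J/n` (with `J` the all-ones matrix) is the orthogonal projection onto
`ker L(w)`, so `L(w) + J/n` is invertible and `L(w)⁺ = (L(w) + J/n)⁻¹ - J/n`. As `B J = 0`, this
gives `R(w) = B (L(w) + J/n)⁻¹ Bᵀ` near `w`, where the matrix being inverted is affine in `w`.
Differentiating the inverse, `∂R/∂w_i = -R χ_i χ_iᵀ R`, hence `∂R_jj/∂w_i = -R_ij²` by symmetry of
`R`, and the chain rule gives the gradient of `F`. -/

open Matrix BigOperators Polynomial Filter Topology

/-- The four Penrose conditions characterizing the Moore–Penrose pseudoinverse. -/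
def IsMoorePenrose {m k : Type*} [Fintype m] [Fintype k] (M : Matrix m k ℝ)
    (P : Matrix k m ℝ) : Prop :=
  M * P * M = M ∧ P * M * P = P ∧ (M * P)ᵀ = M * P ∧ (P * M)ᵀ = P * M

/- The Moore–Penrose pseudoinverse `M⁺`: it always exists and is unique, so this
choice-based definition picks out exactly the Moore–Penrose pseudoinverse. -/
open Classical in
noncomputable def pinv {m k : Type*} [Fintype m] [Fintype k] (M : Matrix m k ℝ) :
    Matrix k m ℝ :=
  if h : ∃ P, IsMoorePenrose M P then h.choose else 0

/-- Index type for the unordered pairs `{u,v}`, `u < v`, of vertices of the complete graph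
on `n` vertices; there are `n(n-1)/2` of them. -/
abbrev PairIdx (n : ℕ) := {p : Fin n × Fin n // p.1 < p.2}

/-- The signed vertex-edge incidence matrix `B` of the complete graph on `n` vertices:
the row for the pair `{u,v}` (with `u < v`) is `χ_{u,v} = e_u - e_v`. -/
def incB (n : ℕ) : Matrix (PairIdx n) (Fin n) ℝ :=
  Matrix.of fun p i => (if i = p.1.1 then 1 else 0) - (if i = p.1.2 then 1 else 0)

/-- The entrywise absolute value `|B|` of the incidence matrix `B`. -/
def absB (n : ℕ) : Matrix (PairIdx n) (Fin n) ℝ := (incB n).map fun x => |x|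

/-- `L(w) = Bᵀ diag(w) B`, the Laplacian of the weighted graph with edge weights `w`. -/
noncomputable def Lw {n : ℕ} (w : PairIdx n → ℝ) : Matrix (Fin n) (Fin n) ℝ :=
  (incB n)ᵀ * Matrix.diagonal w * incB n

/-- `R(w) = B L(w)⁺ Bᵀ`, whose diagonal entries are the pairwise effective resistances. -/
noncomputable def Rw {n : ℕ} (w : PairIdx n → ℝ) : Matrix (PairIdx n) (PairIdx n) ℝ :=
  incB n * pinv (Lw w) * (incB n)ᵀ

/-- The least squares objective `F(w) = Σ_{j ∈ S} ([R(w)]_{j,j} - r̄(j))²`. -/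
noncomputable def Fobj {n : ℕ} (S : Finset (PairIdx n)) (rbar : PairIdx n → ℝ)
    (w : PairIdx n → ℝ) : ℝ :=
  ∑ j ∈ S, (Rw w j j - rbar j) ^ 2

theorem IsMoorePenrose.unique {m k : Type*} [Fintype m] [Fintype k] {M : Matrix m k ℝ}
    {P Q : Matrix k m ℝ} (hP : IsMoorePenrose M P) (hQ : IsMoorePenrose M Q) : P = Q := by
  obtain ⟨hP1, hP2, hP3, hP4⟩ := hP
  obtain ⟨hQ1, hQ2, hQ3, hQ4⟩ := hQ
  have hP_eq : P = P * (M * Q) :=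
    calc P = P * (M * Q * M * P)ᵀ := by rw [hQ1, hP3, ← Matrix.mul_assoc, hP2]
    _ = P * (M * Q) := by
        rw [Matrix.mul_assoc (M * Q), Matrix.transpose_mul, hP3, hQ3, ← Matrix.mul_assoc P,
          ← Matrix.mul_assoc P, hP2]
  have hQ_eq : Q = P * (M * Q) :=
    calc Q = (Q * M * P * M)ᵀ * Q := by
          rw [Matrix.mul_assoc Q, Matrix.mul_assoc Q, hP1, hQ4, hQ2]
    _ = P * (M * Q) := by
        rw [Matrix.mul_assoc (Q * M), Matrix.transpose_mul, hP4, hQ4, Matrix.mul_assoc, hQ2,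
          Matrix.mul_assoc]
  exact hP_eq.trans hQ_eq.symm

theorem pinv_eq_of_isMoorePenrose {m k : Type*} [Fintype m] [Fintype k] {M : Matrix m k ℝ}
    {P : Matrix k m ℝ} (h : IsMoorePenrose M P) : pinv M = P := by
  have hex : ∃ P, IsMoorePenrose M P := ⟨P, h⟩
  rw [pinv, dif_pos hex]
  exact hex.choose_spec.unique h

theorem isMoorePenrose_inv_add_sub {ι : Type*} [Fintype ι] [DecidableEq ι]
    {L P : Matrix ι ι ℝ} (hL : Lᵀ = L) (hP : Pᵀ = P) (hPP : P * P = P) (hLP : L * P = 0)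
    (hunit : IsUnit (L + P)) : IsMoorePenrose L ((L + P)⁻¹ - P) := by
  have hdet := (Matrix.isUnit_iff_isUnit_det _).mp hunit
  set N := (L + P)⁻¹
  have hPL : P * L = 0 := by
    simpa only [Matrix.transpose_mul, hL, hP, Matrix.transpose_zero] using congrArg transpose hLP
  have hNP : N * P = P := by
    calc N * P = N * ((L + P) * P) := by rw [Matrix.add_mul, hLP, hPP, zero_add]
    _ = P := by rw [← Matrix.mul_assoc, Matrix.nonsing_inv_mul _ hdet, Matrix.one_mul]
  have hPN : P * N = P := by
    calc P * N = (P * (L + P)) * N := by rw [Matrix.mul_add, hPL, hPP, zero_add]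
    _ = P := by rw [Matrix.mul_assoc, Matrix.mul_nonsing_inv _ hdet, Matrix.mul_one]
  have hLX : L * (N - P) = 1 - P := by
    rw [Matrix.mul_sub, hLP, sub_zero, ← add_sub_cancel_right L P, Matrix.sub_mul,
      Matrix.mul_nonsing_inv _ hdet, hPN]
  have hXL : (N - P) * L = 1 - P := by
    rw [Matrix.sub_mul, hPL, sub_zero, ← add_sub_cancel_right L P, Matrix.mul_sub,
      Matrix.nonsing_inv_mul _ hdet, hNP]
  have hsymm : (1 - P)ᵀ = 1 - P := by rw [Matrix.transpose_sub, Matrix.transpose_one, hP]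
  refine ⟨?_, ?_, by rw [hLX, hsymm], by rw [hXL, hsymm]⟩
  · rw [hLX, Matrix.sub_mul, Matrix.one_mul, hPL, sub_zero]
  · rw [hXL, Matrix.sub_mul, Matrix.one_mul, Matrix.mul_sub, hPN, hPP, sub_self, sub_zero]

noncomputable def avgProj (ι : Type*) [Fintype ι] : Matrix ι ι ℝ :=
  of fun _ _ => (Fintype.card ι : ℝ)⁻¹

section avgProj
variable {ι : Type*} [Fintype ι]

theorem avgProj_transpose : (avgProj ι)ᵀ = avgProj ι := rfl

theorem avgProj_mul_self : avgProj ι * avgProj ι = avgProj ι := by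
  ext i j
  have : Nonempty ι := ⟨i⟩
  have : (Fintype.card ι : ℝ) ≠ 0 := Nat.cast_ne_zero.2 Fintype.card_ne_zero
  simp only [avgProj, mul_apply, of_apply, Finset.sum_const, Finset.card_univ, nsmul_eq_mul]
  field_simp

theorem mul_avgProj_eq_zero {κ : Type*} {B : Matrix κ ι ℝ} (hB : B *ᵥ 1 = 0) :
    B * avgProj ι = 0 := by
  ext p i
  simpa [avgProj, mul_apply, mulVec, dotProduct, ← Finset.sum_mul] using
    congrArg (· * (Fintype.card ι : ℝ)⁻¹) (congrFun hB p)

theorem dotProduct_avgProj_mulVec (x : ι → ℝ) :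
    x ⬝ᵥ avgProj ι *ᵥ x = (∑ i, x i) ^ 2 / Fintype.card ι := by
  simp only [avgProj, mulVec, dotProduct, of_apply]
  rw [← Finset.mul_sum, ← Finset.sum_mul]
  ring

end avgProj

theorem dotProduct_transpose_mul_diagonal_mul_mulVec {ι κ : Type*} [Fintype ι] [Fintype κ]
    [DecidableEq κ] (B : Matrix κ ι ℝ) (w : κ → ℝ) (x : ι → ℝ) :
    x ⬝ᵥ (Bᵀ * diagonal w * B) *ᵥ x = ∑ k, w k * (B *ᵥ x) k ^ 2 := by
  rw [← mulVec_mulVec, ← mulVec_mulVec, dotProduct_mulVec, vecMul_transpose]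
  simp only [dotProduct, mulVec_diagonal, sq]
  exact Finset.sum_congr rfl fun k _ => by ring

noncomputable def resistanceOf {ι κ : Type*} [Fintype ι] [Fintype κ] [DecidableEq ι]
    [DecidableEq κ] (A : Matrix ι ι ℝ) (B : Matrix κ ι ℝ) (v : κ → ℝ) : Matrix κ κ ℝ :=
  B * (Bᵀ * diagonal v * B + A)⁻¹ * Bᵀ

theorem resistanceOf_transpose {ι κ : Type*} [Fintype ι] [Fintype κ] [DecidableEq ι]
    [DecidableEq κ] {A : Matrix ι ι ℝ} (hA : Aᵀ = A) (B : Matrix κ ι ℝ) (v : κ → ℝ) :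
    (resistanceOf A B v)ᵀ = resistanceOf A B v := by
  simp only [resistanceOf, transpose_mul, transpose_transpose, transpose_nonsing_inv,
    transpose_add, hA, diagonal_transpose, Matrix.mul_assoc]

section Derivative
variable {ι κ : Type*} [Fintype ι] [Fintype κ] [DecidableEq ι] [DecidableEq κ]

-- Any norm would do; the operator norm makes square matrices the normed algebra that
-- `hasFDerivAt_ringInverse` needs.
attribute [local instance] Matrix.linftyOpNormedAddCommGroup Matrix.linftyOpNormedSpace
  Matrix.linftyOpNormedRing Matrix.linftyOpNormedAlgebra

theorem HasFDerivAt.matrix_inv {E : Type*} [NormedAddCommGroup E] [NormedSpace ℝ E]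
    {f : E → Matrix ι ι ℝ} {f' : E →L[ℝ] Matrix ι ι ℝ} {x : E} (hf : HasFDerivAt f f' x)
    (hx : IsUnit (f x)) :
    HasFDerivAt (fun y => (f y)⁻¹)
      ((-ContinuousLinearMap.mulLeftRight ℝ _ (f x)⁻¹ (f x)⁻¹).comp f') x := by
  obtain ⟨u, hu⟩ := hx
  have hinv : HasFDerivAt Ring.inverse
      (-ContinuousLinearMap.mulLeftRight ℝ _ (f x)⁻¹ (f x)⁻¹) (f x) := by
    rw [← hu, ← coe_units_inv]
    exact hasFDerivAt_ringInverse u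
  simpa only [Function.comp_def, nonsing_inv_eq_ringInverse] using hinv.comp x hf

theorem hasFDerivAt_resistanceOf_apply (A : Matrix ι ι ℝ) (B : Matrix κ ι ℝ) {w : κ → ℝ}
    (hw : IsUnit (Bᵀ * diagonal w * B + A)) (j : κ) :
    HasFDerivAt (fun v => resistanceOf A B v j j)
      (-∑ k, (resistanceOf A B w j k * resistanceOf A B w k j) • .proj k : (κ → ℝ) →L[ℝ] ℝ)
      w := by
  let gram : (κ → ℝ) →L[ℝ] Matrix ι ι ℝ := LinearMap.toContinuousLinearMap <|
    mulRightLinearMap ι ℝ B ∘ₗ mulLeftLinearMap κ ℝ Bᵀ ∘ₗ diagonalLinearMap κ ℝ ℝ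
  let entry : Matrix ι ι ℝ →L[ℝ] ℝ := LinearMap.toContinuousLinearMap <|
    entryLinearMap ℝ ℝ j j ∘ₗ mulRightLinearMap κ ℝ Bᵀ ∘ₗ mulLeftLinearMap ι ℝ B
  have hgram_apply (v : κ → ℝ) : gram v = Bᵀ * diagonal v * B := rfl
  have hinv := ((gram.hasFDerivAt (x := w)).add_const A).matrix_inv hw
  rw [hgram_apply] at hinv
  set M := Bᵀ * diagonal w * B + A
  have hD : entry.comp ((-ContinuousLinearMap.mulLeftRight ℝ _ M⁻¹ M⁻¹).comp gram)
      = -∑ k, (resistanceOf A B w j k * resistanceOf A B w k j) • ContinuousLinearMap.proj k := by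
    refine ContinuousLinearMap.ext fun u => ?_
    change (B * -(M⁻¹ * (Bᵀ * diagonal u * B) * M⁻¹) * Bᵀ) j j = _
    have hsandwich : B * -(M⁻¹ * (Bᵀ * diagonal u * B) * M⁻¹) * Bᵀ
        = -(resistanceOf A B w * diagonal u * resistanceOf A B w) := by
      simp only [resistanceOf, Matrix.mul_neg, Matrix.neg_mul, Matrix.mul_assoc, M]
    rw [hsandwich, neg_apply, mul_apply]
    simp [mul_diagonal, mul_right_comm]
  exact (entry.hasFDerivAt.comp w hinv).congr_fderiv hD

end Derivative

section CompleteGraph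
variable {n : ℕ}

theorem incB_mulVec (x : Fin n → ℝ) (p : PairIdx n) : (incB n *ᵥ x) p = x p.1.1 - x p.1.2 := by
  simp [incB, mulVec, dotProduct, sub_mul, Finset.sum_sub_distrib]

theorem incB_mulVec_one : incB n *ᵥ 1 = 0 := by
  ext p
  simp [incB_mulVec]

theorem eq_of_incB_mulVec_eq_zero {x : Fin n → ℝ} (hx : incB n *ᵥ x = 0) (i j : Fin n) :
    x i = x j := by
  have hedge (p : PairIdx n) : x p.1.1 = x p.1.2 :=
    sub_eq_zero.1 ((incB_mulVec x p).symm.trans (congrFun hx p))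
  rcases lt_trichotomy i j with hij | rfl | hji
  · exact hedge ⟨(i, j), hij⟩
  · rfl
  · exact (hedge ⟨(j, i), hji⟩).symm

theorem Lw_transpose (v : PairIdx n → ℝ) : (Lw v)ᵀ = Lw v := by
  simp [Lw, transpose_mul, Matrix.mul_assoc]

theorem Lw_mul_avgProj (v : PairIdx n → ℝ) : Lw v * avgProj (Fin n) = 0 := by
  rw [Lw, Matrix.mul_assoc, mul_avgProj_eq_zero incB_mulVec_one, Matrix.mul_zero]

/-- The quadratic form is `∑ v_{uv} (x_u - x_v)² + (∑ x)² / n`; the first sum forces `x` to be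
constant, the second forces that constant to vanish. -/
theorem posDef_Lw_add_avgProj {v : PairIdx n → ℝ} (hv : ∀ p, 0 < v p) :
    (Lw v + avgProj (Fin n)).PosDef := by
  refine posDef_iff_dotProduct_mulVec.2 ⟨?_, fun x hx => ?_⟩
  · simp [IsHermitian, conjTranspose_eq_transpose_of_trivial, Lw_transpose, avgProj_transpose]
  rw [star_trivial, add_mulVec, dotProduct_add, Lw, dotProduct_transpose_mul_diagonal_mul_mulVec,
    dotProduct_avgProj_mulVec, Fintype.card_fin]
  have hterm (p : PairIdx n) : 0 ≤ v p * (incB n *ᵥ x) p ^ 2 :=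
    mul_nonneg (hv p).le (sq_nonneg _)
  have hedges : 0 ≤ ∑ p, v p * (incB n *ᵥ x) p ^ 2 := Finset.sum_nonneg fun p _ => hterm p
  have hmean : 0 ≤ (∑ i, x i) ^ 2 / n := by positivity
  by_contra hle
  have hBx : incB n *ᵥ x = 0 := by
    ext p
    have := (Finset.sum_eq_zero_iff_of_nonneg fun p _ => hterm p).1
      (le_antisymm (by linarith) hedges) p (Finset.mem_univ p)
    simpa [(hv p).ne'] using this
  apply hx
  ext i
  have hn : (n : ℝ) ≠ 0 := Nat.cast_ne_zero.2 (Fin.pos i).ne'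
  have hsum : ∑ j, x j = 0 := by
    have : (∑ j, x j) ^ 2 / n = 0 := by linarith
    simpa [hn] using this
  have hconst : ∑ j, x j = n * x i := by
    simp [eq_of_incB_mulVec_eq_zero hBx _ i]
  simpa [hn] using hconst.symm.trans hsum

theorem Rw_eq_resistanceOf {v : PairIdx n → ℝ} (hv : ∀ p, 0 < v p) :
    Rw v = resistanceOf (avgProj (Fin n)) (incB n) v := by
  have hpinv : pinv (Lw v) = (Lw v + avgProj (Fin n))⁻¹ - avgProj (Fin n) :=
    pinv_eq_of_isMoorePenrose <| isMoorePenrose_inv_add_sub (Lw_transpose v) avgProj_transpose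
      avgProj_mul_self (Lw_mul_avgProj v) (posDef_Lw_add_avgProj hv).isUnit
  rw [Rw, hpinv, Matrix.mul_sub, mul_avgProj_eq_zero incB_mulVec_one, sub_zero]
  rfl

theorem Rw_apply_comm {w : PairIdx n → ℝ} (hw : ∀ p, 0 < w p) (i j : PairIdx n) :
    Rw w i j = Rw w j i := by
  rw [Rw_eq_resistanceOf hw]
  exact congrFun₂ (resistanceOf_transpose avgProj_transpose (incB n) w) j i

theorem hasFDerivAt_Rw_apply {w : PairIdx n → ℝ} (hw : ∀ p, 0 < w p) (j : PairIdx n) :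
    HasFDerivAt (fun v => Rw v j j)
      (-∑ k, Rw w j k ^ 2 • .proj k : (PairIdx n → ℝ) →L[ℝ] ℝ) w := by
  have hpos : ∀ᶠ v in 𝓝 w, ∀ p, 0 < v p :=
    eventually_all.2 fun p => (continuous_apply p).continuousAt.eventually (lt_mem_nhds (hw p))
  have hderiv := hasFDerivAt_resistanceOf_apply (avgProj (Fin n)) (incB n)
    (posDef_Lw_add_avgProj hw).isUnit j
  rw [← Rw_eq_resistanceOf hw] at hderiv
  refine (hderiv.congr_fderiv ?_).congr_of_eventuallyEq
    (hpos.mono fun v hv => congrFun₂ (Rw_eq_resistanceOf hv) j j)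
  simp only [Rw_apply_comm hw _ j, sq]

end CompleteGraph

theorem stmt13_general {n : ℕ} (S : Finset (PairIdx n)) (rbar : PairIdx n → ℝ)
    (w : PairIdx n → ℝ) (hw : ∀ i, 0 < w i) :
    DifferentiableAt ℝ (Fobj S rbar) w ∧
    ∀ i : PairIdx n, fderiv ℝ (Fobj S rbar) w (Pi.single i 1)
      = 2 * ∑ j ∈ S, (rbar j - Rw w j j) * (Rw w i j) ^ 2 := by
  have hF : HasFDerivAt (Fobj S rbar)
      (∑ j ∈ S, (2 * (Rw w j j - rbar j)) •
        (-∑ k, Rw w j k ^ 2 • .proj k : (PairIdx n → ℝ) →L[ℝ] ℝ)) w := by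
    refine (HasFDerivAt.fun_sum fun j (_ : j ∈ S) =>
      ((hasFDerivAt_Rw_apply hw j).sub_const (rbar j)).pow 2).congr_fderiv ?_
    norm_num
  refine ⟨hF.differentiableAt, fun i => ?_⟩
  rw [hF.fderiv, FunLike.coe_sum, Finset.sum_apply, Finset.mul_sum]
  refine Finset.sum_congr rfl fun j _ => ?_
  simp only [smul_neg, _root_.neg_apply, _root_.smul_apply, _root_.sum_apply,
    ContinuousLinearMap.proj_apply, Pi.single_apply, smul_eq_mul, mul_ite, mul_one, mul_zero,
    Finset.sum_ite_eq', Finset.mem_univ, if_true, Rw_apply_comm hw i j]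
  ring

/-- At every strictly positive weight vector `w`, the objective
`F(w) = Σ_{j ∈ S} ([R(w)]_{j,j} - r̄(j))²` is differentiable, with gradient
`∇F(w) = 2 (R∘R) Δ(w)`, i.e. `∂F/∂w_i = 2 Σ_{j ∈ S} (r̄(j) - [R(w)]_{j,j})([R(w)]_{i,j})²`
for each coordinate `i`. -/
theorem stmt13 {n : ℕ} (hn : 2 ≤ n) (S : Finset (PairIdx n)) (rbar : PairIdx n → ℝ)
    (w : PairIdx n → ℝ) (hw : ∀ i, 0 < w i) :
    DifferentiableAt ℝ (Fobj S rbar) w ∧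
    ∀ i : PairIdx n, fderiv ℝ (Fobj S rbar) w (Pi.single i 1)
      = 2 * ∑ j ∈ S, (rbar j - Rw w j j) * (Rw w i j) ^ 2 :=
  stmt13_general S rbar w hw
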